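/- A system f : S^(m) → P*(S^(n)) is autonomous and time invariant if and only if there exists X ⊆ S^(n) with f(u) = X for all u and every x ∈ X is a constant function. -/
import Mathlib


open Function Set

abbrev Vec (m : ℕ) := Fin m → Bool

/-- `u : ℝ → α` is a signal: a step function with an unbounded increasing
sequence of switch points `0 ≤ t 0 < t 1 < ...`, constant on `(-∞, t 0)`
and on each interval `[t k, t (k+1))`. -/
def IsSignal {α : Type*} (u : ℝ → α) : Prop :=
  ∃ t : ℕ → ℝ, 0 ≤ t 0 ∧ StrictMono t ∧ (∀ M : ℝ, ∃ k : ℕ, M < t k) ∧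
    (∀ s s' : ℝ, s < t 0 → s' < t 0 → u s = u s') ∧
    (∀ k : ℕ, ∀ s : ℝ, t k ≤ s → s < t (k + 1) → u s = u (t k))

/-- The time translation `τ^d(t) = t - d`. -/
def tau (d : ℝ) : ℝ → ℝ := fun t => t - d

/-- `u` switches at `t`: the left limit `u(t-0)` differs from `u t`. -/
def SwitchAt {α : Type*} (u : ℝ → α) (t : ℝ) : Prop :=
  ∃ ε > (0 : ℝ), ∀ s : ℝ, t - ε < s → s < t → u s ≠ u t

/-- An asynchronous system: on every signal input, the value is a nonempty
set of signals. -/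
def IsSystem {α β : Type*} (f : (ℝ → α) → Set (ℝ → β)) : Prop :=
  ∀ u, IsSignal u → (f u).Nonempty ∧ ∀ x ∈ f u, IsSignal x

/-- Autonomous system: constant as a function of the (signal) input. -/
def Autonomous {α β : Type*} (f : (ℝ → α) → Set (ℝ → β)) : Prop :=
  ∃ X : Set (ℝ → β), ∀ u, IsSignal u → f u = X

/-- Deterministic system: every value is a singleton. -/
def Deterministic {α β : Type*} (f : (ℝ → α) → Set (ℝ → β)) : Prop :=
  ∀ u, IsSignal u → ∃ x, f u = {x}

/-- Finite system: every value is a finite set. -/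
def FiniteSys {α β : Type*} (f : (ℝ → α) → Set (ℝ → β)) : Prop :=
  ∀ u, IsSignal u → (f u).Finite

/-- Non-anticipation, first definition. -/
def NonAnticip1 {α β : Type*} (f : (ℝ → α) → Set (ℝ → β)) : Prop :=
  ∀ u, IsSignal u → ∀ x ∈ f u, ∀ d : ℝ,
    IsSignal (u ∘ tau d) → IsSignal (x ∘ tau d)

/-- Non-anticipation, second definition. -/
def NonAnticip2 {α β : Type*} (f : (ℝ → α) → Set (ℝ → β)) : Prop :=
  ∀ t₁ : ℝ, ∀ u v, IsSignal u → IsSignal v → (∀ s < t₁, u s = v s) →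
    ∀ x ∈ f u, ∃ y ∈ f v, ∀ s < t₁, x s = y s

/-- Time invariance. -/
def TimeInv {α β : Type*} (f : (ℝ → α) → Set (ℝ → β)) : Prop :=
  ∀ u, IsSignal u → ∀ x ∈ f u, ∀ d : ℝ, IsSignal (u ∘ tau d) →
    IsSignal (x ∘ tau d) ∧ (x ∘ tau d) ∈ f (u ∘ tau d)

/-- Serial connection `f ∘ (f¹,...,fᵖ)`, identifying `S^(m₁)×...×S^(m_p)`
with `S^(m₁+...+m_p)` via the dependent product. -/
def serial {p n : ℕ} {mdim ndim : Fin p → ℕ}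
    (f : (ℝ → ∀ i, Vec (ndim i)) → Set (ℝ → Vec n))
    (fi : ∀ i, (ℝ → Vec (mdim i)) → Set (ℝ → Vec (ndim i))) :
    (ℝ → ∀ i, Vec (mdim i)) → Set (ℝ → Vec n) :=
  fun u => {x | ∃ y : ∀ i, ℝ → Vec (ndim i),
    (∀ i, y i ∈ fi i (fun t => u t i)) ∧ x ∈ f (fun t i => y i t)}

/-- Stability relative to a Boolean function `H`. -/
def StableRel {m q n : ℕ} (H : Vec m → Vec q)
    (f : (ℝ → Vec m) → Set (ℝ → Vec n)) : Prop :=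
  ∀ u, IsSignal u → ∀ x ∈ f u,
    (∃ t₁ : ℝ, ∀ t ≥ t₁, H (u t) = H (u t₁)) →
    ∃ t₁ : ℝ, ∀ t ≥ t₁, x t = x t₁

lemma isSignal_const' {α : Type*} (c : α) : IsSignal (fun _ : ℝ => c) := by
  refine ⟨fun k => k, by norm_num, ?_, fun M => ?_, fun _ _ _ _ => rfl, fun _ _ _ _ => rfl⟩
  · intro a b hab; simpa using (Nat.cast_lt (α := ℝ)).2 hab
  · obtain ⟨k, hk⟩ := exists_nat_gt M; exact ⟨k, by exact_mod_cast hk⟩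

lemma const_of_shifts {α : Type*} (x : ℝ → α)
    (h : ∀ d : ℝ, IsSignal (x ∘ tau d)) : ∀ t, x t = x 0 := by
  intro t
  set d : ℝ := -(max t 0) - 1 with hd
  obtain ⟨ts, h0, _, _, hconst, _⟩ := h d
  have h1 : t + d < ts 0 := by
    have := le_max_left t 0; linarith
  have h2 : d < ts 0 := by
    have := le_max_right t 0; linarith
  have := hconst (t + d) d h1 h2
  simpa [tau, Function.comp] using this

theorem stmt18 {m n : ℕ} (f : (ℝ → Vec m) → Set (ℝ → Vec n)) :
    (Autonomous f ∧ TimeInv f) ↔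
      ∃ X : Set (ℝ → Vec n), (∀ u, IsSignal u → f u = X) ∧
        ∀ x ∈ X, ∃ c, ∀ t, x t = c := by
  constructor
  · rintro ⟨⟨X, hX⟩, hTI⟩
    refine ⟨X, hX, fun x hx => ?_⟩
    have hu0 : IsSignal (fun _ : ℝ => (fun _ => false : Vec m)) := isSignal_const' _
    have hxfu : x ∈ f (fun _ : ℝ => (fun _ => false : Vec m)) := by
      rw [hX _ hu0]; exact hx
    have hsig : ∀ d : ℝ, IsSignal (x ∘ tau d) := fun d =>
      (hTI _ hu0 x hxfu d (isSignal_const' _)).1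
    exact ⟨x 0, const_of_shifts x hsig⟩
  · rintro ⟨X, hX, hconst⟩
    refine ⟨⟨X, hX⟩, ?_⟩
    intro u hu x hx d hud
    obtain ⟨c, hc⟩ := hconst x (by rw [hX u hu] at hx; exact hx)
    have hxeq : x ∘ tau d = x := by
      funext s; simp [tau, Function.comp, hc]
    rw [hxeq]
    exact ⟨by simpa [funext hc] using isSignal_const' c,
      by rw [hX _ hud, ← hX u hu]; exact hx⟩
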